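/- arXiv:1009.0492 — 4 statements merged into one kernel-verified Lean document; each statement's English description precedes it below -/
import Mathlib

section
/- The normal-form monotone span program computes the access structure Γ: for every subset A ⊆ P, the vector ε₁ = (1,0,…,0) ∈ F_q^e lies in the row span of M_A (equivalently, ε₁ ∈ Im(M_A^t)) if and only if A contains some minimal authorized set A_i, i.e. if and only if A ∈ Γ. -/
/-!
Normal-form monotone span programs (Smith's construction for quantum secret sharing).

Players are `Fin n`.  The minimal authorized sets are `A 0, …, A (k-1)`,
distinct nonempty subsets forming an antichain whose union is all of `Fin n`.
`enum i` fixes an enumeration of the elements of `A i`; the last element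
`enum i ⟨card - 1⟩` plays the role of the distinguished participant of block `i`.
-/

/-- The combinatorial data of a normal-form monotone span program. -/
structure MSP (n k : ℕ) where
  /-- the minimal authorized sets -/
  A : Fin k → Finset (Fin n)
  nonempty : ∀ i, (A i).Nonempty
  /-- antichain (this also forces the `A i` to be pairwise distinct) -/
  antichain : ∀ i j : Fin k, i ≠ j → ¬ A i ⊆ A j
  /-- every player occurs in some minimal authorized set -/
  cover : ∀ p : Fin n, ∃ i, p ∈ A i
  /-- a fixed enumeration `p_{i,1}, …, p_{i,|A_i|}` of each `A i` -/
  enum : ∀ i, Fin ((A i).card) ≃ {p : Fin n // p ∈ A i}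

namespace MSP

variable {n k : ℕ}

/-- Row indices of the span matrix: block `i` has `|A i|` rows. -/
abbrev Rows (S : MSP n k) := (i : Fin k) × Fin ((S.A i).card)

/-- Column indices: the first column (`none`) together with the blocks
`C i` of `r_i = |A i| - 1` columns (`some ⟨i, j⟩`). -/
abbrev Cols (S : MSP n k) := Option ((i : Fin k) × Fin ((S.A i).card - 1))

/-- The player labelling the rows (the map `ψ`). -/
def label (S : MSP n k) (r : S.Rows) : Fin n := (S.enum r.1 r.2 : Fin n)

/-- The normal-form span matrix `M`.  In block `i`, row `j` with
`j < |A i| - 1` is the `j`-th identity row (a single `1` in column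
`some ⟨i, j⟩`), and the last row (`j = |A i| - 1`) is
`(1, 0, …, 0, -1, …, -1)`: a `1` in column `none` and `-1` in every
column of block `i`. -/
def M (F : Type*) [Field F] (S : MSP n k) : Matrix S.Rows S.Cols F :=
  Matrix.of fun r c =>
    match c with
    | none => if (r.2 : ℕ) = (S.A r.1).card - 1 then 1 else 0
    | some ⟨i, j⟩ =>
        if i = r.1 then
          (if (r.2 : ℕ) = (S.A r.1).card - 1 then -1
           else if (j : ℕ) = (r.2 : ℕ) then 1 else 0)
        else 0

/-- The submatrix `M_B` of `M` consisting of all rows labelled by players in `B`. -/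
def MSub (F : Type*) [Field F] (S : MSP n k) (B : Finset (Fin n)) :
    Matrix {r : S.Rows // S.label r ∈ B} S.Cols F :=
  Matrix.of fun r c => M F S r.1 c

/-- The vector `ε₁ = (1, 0, …, 0)`. -/
def eps1 (F : Type*) [Field F] (S : MSP n k) : S.Cols → F :=
  fun c => match c with
  | none => 1
  | some _ => 0

/-- The access structure computed by the program:
`B` is authorized iff it contains some minimal authorized set. -/
def auth (S : MSP n k) (B : Finset (Fin n)) : Prop := ∃ i, S.A i ⊆ B

/-- Self-duality of the access structure. -/
def selfDual (S : MSP n k) : Prop :=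
  ∀ X : Finset (Fin n), S.auth X ↔ ¬ S.auth (Finset.univ \ X)

end MSP

open MSP

/-!
If `B` contains a minimal authorized set `A i`, the rows of block `i` sum to `ε₁`. Otherwise
every block has a row `t i` whose player is outside `B`, and the vector that is `1` on the first
column and on column `t i` of each block `i` is orthogonal to every row of `M` except the rows
`t i`; it is thus orthogonal to the row span of `M_B` but not to `ε₁`.
-/

theorem Fin.sum_ite_val_eq {M : Type*} [AddCommMonoid M] (m a : ℕ) (x : M) :
    ∑ j : Fin m, (if (j : ℕ) = a then x else 0) = if a < m then x else 0 := by
  rw [Fin.sum_univ_eq_sum_range (fun j => if j = a then x else 0), Finset.sum_ite_eq']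
  simp only [Finset.mem_range]

namespace MSP

variable {n k : ℕ} (F : Type*) [Field F] (S : MSP n k)

theorem sum_block_rows_eq_eps1 (i : Fin k) : ∑ s, M F S ⟨i, s⟩ = eps1 F S := by
  have hm : 0 < (S.A i).card := (S.nonempty i).card_pos
  ext (_ | ⟨i', j⟩)
  · simp only [Finset.sum_apply, M, Matrix.of_apply, eps1, Fin.sum_ite_val_eq]
    exact if_pos (by omega)
  · simp only [Finset.sum_apply, M, Matrix.of_apply, eps1]
    by_cases hi : i' = i
    · subst hi
      have hj : (j : ℕ) < (S.A i').card - 1 := j.isLt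
      have hsplit : ∀ s : Fin (S.A i').card,
          (if (s : ℕ) = (S.A i').card - 1 then -1 else if (j : ℕ) = s then 1 else 0 : F) =
            (if (s : ℕ) = (S.A i').card - 1 then -1 else 0) +
              (if (s : ℕ) = j then 1 else 0) := by
        intro s
        split_ifs <;> first | omega | simp
      simp only [if_true, hsplit, Finset.sum_add_distrib, Fin.sum_ite_val_eq]
      rw [if_pos (by omega), if_pos (by omega), neg_add_cancel]
    · simp only [hi, if_false, Finset.sum_const_zero]

-- When `t i` is the last row of block `i`, this vanishes on the whole block `C i`.
def separatingVector (t : ∀ i, Fin (S.A i).card) : S.Cols → F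
  | none => 1
  | some ⟨i, j⟩ => if (j : ℕ) = t i then 1 else 0

theorem eps1_dotProduct_separatingVector (t : ∀ i, Fin (S.A i).card) :
    eps1 F S ⬝ᵥ separatingVector F S t = 1 := by
  simp [dotProduct, Fintype.sum_option, eps1, separatingVector]

theorem M_dotProduct_separatingVector (t : ∀ i, Fin (S.A i).card) (r : S.Rows) :
    M F S r ⬝ᵥ separatingVector F S t = if r.2 = t r.1 then 1 else 0 := by
  obtain ⟨i, s⟩ := r
  rw [dotProduct, Fintype.sum_option, ← Finset.univ_sigma_univ, Finset.sum_sigma,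
    Finset.sum_eq_single i (fun i' _ hi' => by simp [M, hi']) (by simp)]
  simp only [M, Matrix.of_apply, separatingVector, if_true, mul_ite, mul_one, mul_zero]
  by_cases hs : (s : ℕ) = (S.A i).card - 1
  · have ht : (t i : ℕ) < (S.A i).card - 1 ↔ ¬s = t i := by
      have := (t i).isLt
      rw [Fin.ext_iff]
      omega
    simp only [hs, if_true, Fin.sum_ite_val_eq, ht]
    split_ifs <;> simp
  · have hdiag : ∀ c : Fin ((S.A i).card - 1),
        (if (c : ℕ) = t i then (if (c : ℕ) = s then 1 else 0) else 0 : F) =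
          if (c : ℕ) = s then (if s = t i then 1 else 0) else 0 := by
      intro c
      simp only [Fin.ext_iff]
      split_ifs <;> first | rfl | omega
    simp only [hs, if_false, hdiag, Fin.sum_ite_val_eq, zero_add]
    exact if_pos (by omega)

variable {F S} {B : Finset (Fin n)}

theorem eps1_mem_span_rows_of_subset {i : Fin k} (hi : S.A i ⊆ B) :
    eps1 F S ∈
      Submodule.span F (Set.range fun r : {r : S.Rows // S.label r ∈ B} => M F S r.1) := by
  rw [← sum_block_rows_eq_eps1 F S i]
  exact Submodule.sum_mem _ fun s _ =>
    Submodule.subset_span ⟨⟨⟨i, s⟩, hi (S.enum i s).2⟩, rfl⟩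

theorem exists_subset_of_eps1_mem_span_rows
    (h : eps1 F S ∈
      Submodule.span F (Set.range fun r : {r : S.Rows // S.label r ∈ B} => M F S r.1)) :
    ∃ i, S.A i ⊆ B := by
  by_contra! hB
  have hout : ∀ i, ∃ s, S.label ⟨i, s⟩ ∉ B := fun i => by
    obtain ⟨p, hpA, hpB⟩ := Finset.not_subset.mp (hB i)
    exact ⟨(S.enum i).symm ⟨p, hpA⟩, by simpa [label] using hpB⟩
  choose t ht using hout
  let κ := separatingVector F S t
  have hspan : Submodule.span F (Set.range fun r : {r : S.Rows // S.label r ∈ B} => M F S r.1) ≤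
      LinearMap.ker ((dotProductBilin F F).flip κ) := by
    refine Submodule.span_le.2 ?_
    rintro _ ⟨⟨⟨i, s⟩, hs⟩, rfl⟩
    have hst : s ≠ t i := fun hst => ht i (hst ▸ hs)
    simpa [hst] using M_dotProduct_separatingVector F S t ⟨i, s⟩
  have hzero : eps1 F S ⬝ᵥ κ = 0 := hspan h
  rw [eps1_dotProduct_separatingVector] at hzero
  exact one_ne_zero hzero

end MSP

theorem msp_computes_access_structure_general {F : Type*} [Field F] {n k : ℕ}
    (S : MSP n k) (B : Finset (Fin n)) :
    eps1 F S ∈ Submodule.span F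
        (Set.range fun r : {r : S.Rows // S.label r ∈ B} => M F S r.1) ↔
      ∃ i, S.A i ⊆ B :=
  ⟨exists_subset_of_eps1_mem_span_rows, fun ⟨_, hi⟩ => eps1_mem_span_rows_of_subset hi⟩

/-- The normal-form monotone span program computes the access
structure `Γ`: for every subset `B ⊆ P`, the vector `ε₁ = (1,0,…,0)` lies in
the row span of `M_B` (equivalently `ε₁ ∈ Im(M_B^t)`) if and only if `B`
contains some minimal authorized set `A i`, i.e. iff `B ∈ Γ`. -/
theorem msp_computes_access_structure {F : Type*} [Field F] [Fintype F] {n k : ℕ}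
    (S : MSP n k) (B : Finset (Fin n)) :
    eps1 F S ∈ Submodule.span F
        (Set.range fun r : {r : S.Rows // S.label r ∈ B} => M F S r.1) ↔
      ∃ i, S.A i ⊆ B :=
  msp_computes_access_structure_general S B
end

section
/- Suppose Γ is self-dual. Let A ⊆ P and p ∈ P∖A be such that A ∪ {p} ∉ Γ. Let A^p = {A_i ∈ Γ_min : p ∈ A_i and A_i ⊆ P∖A} and Ā^p = {A_i ∈ Γ_min : p ∈ A_i and A_i ⊄ P∖A}. Then rk(M_{A∪{p}}) = rk(M_A) + |A^p| + |Ā^p|, where rk denotes rank over F_q. -/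
open MSP

/-!
In a vanishing linear combination of rows of `M`, the column `(i, j)` forces the coefficient of
row `j` of block `i` to equal that of the last row of block `i`, so coefficients are constant on
blocks. If `B` is unauthorized, every block `A i` has a player outside `B`, whose row has
coefficient `0`; hence the rows of `M_B` are independent and `rk M_B` is their number. Adding
`p ∉ A` adds one row for each `A i ∋ p`, and these `A i` split into `A^p` and `Ā^p`.
-/

namespace MSP

variable {n k : ℕ} (S : MSP n k)

def lastRow (i : Fin k) : Fin (S.A i).card :=
  ⟨(S.A i).card - 1, Nat.sub_one_lt_of_lt (S.nonempty i).card_pos⟩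

variable {F : Type*} [Field F]

theorem M_apply_some_self (i : Fin k) (j : Fin ((S.A i).card - 1)) (j' : Fin (S.A i).card) :
    M F S ⟨i, j'⟩ (some ⟨i, j⟩) =
      (if j' = Fin.castLE (Nat.sub_le _ _) j then 1 else 0) -
        if j' = S.lastRow i then 1 else 0 := by
  have hj := j.2
  simp only [M, lastRow, Matrix.of_apply, Fin.ext_iff, Fin.val_castLE]
  split_ifs <;> first | omega | ring

theorem M_apply_some_of_ne {i i' : Fin k} (h : i' ≠ i) (j : Fin ((S.A i).card - 1))
    (j' : Fin (S.A i').card) : M F S ⟨i', j'⟩ (some ⟨i, j⟩) = 0 := by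
  simp [M, h.symm]

theorem sum_smul_M_apply_some (G : S.Rows → F) (i : Fin k) (j : Fin ((S.A i).card - 1)) :
    (∑ r, G r • M F S r) (some ⟨i, j⟩) =
      G ⟨i, Fin.castLE (Nat.sub_le _ _) j⟩ - G ⟨i, S.lastRow i⟩ := by
  rw [Finset.sum_apply, Fintype.sum_sigma, Fintype.sum_eq_single i fun i' h => by
    simp [S.M_apply_some_of_ne h]]
  simp [S.M_apply_some_self, mul_sub, Finset.sum_sub_distrib]

theorem eq_lastRow_of_sum_smul_M_eq_zero {G : S.Rows → F} (hG : ∑ r, G r • M F S r = 0)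
    (r : S.Rows) : G r = G ⟨r.1, S.lastRow r.1⟩ := by
  obtain ⟨i, j⟩ := r
  by_cases hj : j = S.lastRow i
  · rw [hj]
  · have hlt : (j : ℕ) < (S.A i).card - 1 := by
      have := j.2; simp only [lastRow, Fin.ext_iff] at hj; omega
    have := S.sum_smul_M_apply_some G i ⟨j, hlt⟩
    rwa [hG, Pi.zero_apply, eq_comm, sub_eq_zero] at this

theorem linearIndependent_MSub {B : Finset (Fin n)} (hB : ¬ S.auth B) :
    LinearIndependent F (MSub F S B) := by
  have hli : LinearIndepOn F (M F S) {r | S.label r ∈ B} := by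
    refine linearIndepOn_iff.2 fun l hl hsum => Finsupp.ext fun r => ?_
    rw [Finsupp.linearCombination_apply F (v := M F S) l,
      Finsupp.sum_fintype l (fun r a => a • M F S r) fun _ => zero_smul _ _] at hsum
    obtain ⟨q, hqA, hqB⟩ := Finset.not_subset.1 fun h => hB ⟨r.1, h⟩
    set rq : S.Rows := ⟨r.1, (S.enum r.1).symm ⟨q, hqA⟩⟩
    have hrq : l rq = 0 :=
      Finsupp.notMem_support_iff.1 fun h => hqB (by simpa [rq, label] using hl h)
    rwa [S.eq_lastRow_of_sum_smul_M_eq_zero hsum r, ← S.eq_lastRow_of_sum_smul_M_eq_zero hsum rq]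
  exact hli.linearIndependent

theorem rank_MSub_of_not_auth {B : Finset (Fin n)} (hB : ¬ S.auth B) :
    (MSub F S B).rank = Nat.card {r : S.Rows // S.label r ∈ B} := by
  rw [LinearIndependent.rank_matrix (M := MSub F S B) (S.linearIndependent_MSub hB),
    Nat.card_eq_fintype_card]

def labelFiberEquiv (p : Fin n) : {r : S.Rows // S.label r = p} ≃ {i : Fin k // p ∈ S.A i} where
  toFun | ⟨⟨i, j⟩, h⟩ => ⟨i, h ▸ (S.enum i j).2⟩
  invFun i := ⟨⟨i.1, (S.enum i.1).symm ⟨p, i.2⟩⟩, by simp [label]⟩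
  left_inv := by
    rintro ⟨⟨i, j⟩, rfl⟩
    simp [label]
  right_inv _ := rfl

theorem card_rows_insert {A : Finset (Fin n)} {p : Fin n} (hpA : p ∉ A) :
    Nat.card {r : S.Rows // S.label r ∈ insert p A}
      = Nat.card {r : S.Rows // S.label r ∈ A} + Nat.card {i : Fin k // p ∈ S.A i} := by
  classical
  have hdisj : Disjoint (fun r : S.Rows => S.label r ∈ A) (S.label · = p) := by
    simp only [Pi.disjoint_iff, Prop.disjoint_iff, not_and]
    rintro r hr rfl
    exact hpA hr
  rw [← Nat.card_congr (S.labelFiberEquiv p), ← Nat.card_sum,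
    ← Nat.card_congr (subtypeOrEquiv _ _ hdisj)]
  exact Nat.card_congr (Equiv.subtypeEquivRight fun r => Finset.mem_insert.trans or_comm)

end MSP

theorem Nat.card_subtype_eq_card_and_add_card_and_not {α : Type*} [Finite α] (P Q : α → Prop) :
    Nat.card {a // P a} = Nat.card {a // P a ∧ Q a} + Nat.card {a // P a ∧ ¬ Q a} := by
  classical
  rw [← Nat.card_congr (Equiv.sumCompl fun a : {a // P a} => Q a), Nat.card_sum,
    Nat.card_congr (Equiv.subtypeSubtypeEquivSubtypeInter P Q),
    Nat.card_congr (Equiv.subtypeSubtypeEquivSubtypeInter P (¬ Q ·))]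

theorem rank_insert_unauthorized_general {F : Type*} [Field F] {n k : ℕ}
    (S : MSP n k) (A : Finset (Fin n)) (p : Fin n) (hpA : p ∉ A)
    (hA' : ¬ S.auth (insert p A)) :
    (MSub F S (insert p A)).rank = (MSub F S A).rank
      + Nat.card {i : Fin k // p ∈ S.A i ∧ S.A i ⊆ Finset.univ \ A}
      + Nat.card {i : Fin k // p ∈ S.A i ∧ ¬ S.A i ⊆ Finset.univ \ A} := by
  have hA : ¬ S.auth A := fun ⟨i, hi⟩ => hA' ⟨i, hi.trans (Finset.subset_insert p A)⟩
  rw [S.rank_MSub_of_not_auth hA', S.rank_MSub_of_not_auth hA, S.card_rows_insert hpA, add_assoc,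
    ← Nat.card_subtype_eq_card_and_add_card_and_not]

/-- Suppose `Γ` is self-dual.  If `A ⊆ P`, `p ∉ A` and
`A ∪ {p} ∉ Γ`, then with
`A^p = {A_i ∈ Γ_min : p ∈ A_i ∧ A_i ⊆ P∖A}` and
`Ā^p = {A_i ∈ Γ_min : p ∈ A_i ∧ A_i ⊄ P∖A}`,
we have `rk(M_{A∪{p}}) = rk(M_A) + |A^p| + |Ā^p|`. -/
theorem rank_insert_unauthorized {F : Type*} [Field F] [Fintype F] {n k : ℕ}
    (S : MSP n k) (hsd : S.selfDual) (A : Finset (Fin n)) (p : Fin n) (hpA : p ∉ A)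
    (hA' : ¬ S.auth (insert p A)) :
    (MSub F S (insert p A)).rank = (MSub F S A).rank
      + Nat.card {i : Fin k // p ∈ S.A i ∧ S.A i ⊆ Finset.univ \ A}
      + Nat.card {i : Fin k // p ∈ S.A i ∧ ¬ S.A i ⊆ Finset.univ \ A} :=
  rank_insert_unauthorized_general S A p hpA hA'
end

section
/- Suppose Γ is self-dual. Let A ⊆ P and p ∈ P∖A be such that A ∪ {p} ∉ Γ. Let Ā^p = {A_i ∈ Γ_min : p ∈ A_i and A_i ⊄ P∖A}. Then rk(M_{P∖(A∪{p})}) = rk(M_{P∖A}) − |Ā^p|, where rk denotes rank over F_q. -/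
open MSP

/-!
If `B` is authorized, `ε₁` is the sum of the rows of any block contained in `B`, so the row space
of `M_B` is spanned by `ε₁` and the rows labelled in `B` other than the last rows of blocks
contained in `B` (such a last row is `ε₁` minus the other rows of its block). These vectors are
linearly independent: in a vanishing combination the block coordinates make the coefficients
constant on each block, and every block has a row outside the family. Hence
`rk M_B + #{i | A_i ⊆ B} = #(rows labelled in B) + 1`.

By self-duality `P∖(A∪{p})` is authorized. Removing `p` from `B = P∖A` removes one row from every
block containing `p` and makes every block `A_i ⊆ B` with `p ∈ A_i` no longer contained in the
set, so the rank drops by the number of blocks that contain `p` and are not contained in `B`.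
-/

open Finset Matrix Submodule

namespace MSP

variable {F : Type*} [Field F] {n k : ℕ} (S : MSP n k)

lemma card_A_pos (i : Fin k) : 0 < (S.A i).card :=
  card_pos.mpr (S.nonempty i)

def last (i : Fin k) : Fin (S.A i).card :=
  ⟨(S.A i).card - 1, Nat.sub_one_lt_of_lt (S.card_A_pos i)⟩

lemma eq_last_iff {i : Fin k} {j : Fin (S.A i).card} :
    j = S.last i ↔ (j : ℕ) = (S.A i).card - 1 :=
  Fin.ext_iff

lemma label_mem (r : S.Rows) : S.label r ∈ S.A r.1 :=
  (S.enum r.1 r.2).2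

lemma auth_mono {B C : Finset (Fin n)} (hB : S.auth B) (hBC : B ⊆ C) : S.auth C :=
  let ⟨i, hi⟩ := hB
  ⟨i, hi.trans hBC⟩

lemma vecMul_M_none (g : S.Rows → F) :
    (g ᵥ* M F S) none = ∑ i, g ⟨i, S.last i⟩ := by
  simp [vecMul, dotProduct, M, Fintype.sum_sigma, ← eq_last_iff]

lemma vecMul_M_some (g : S.Rows → F) (i : Fin k) (j : Fin ((S.A i).card - 1)) :
    (g ᵥ* M F S) (some ⟨i, j⟩) = g ⟨i, Fin.castLE (Nat.sub_le _ _) j⟩ - g ⟨i, S.last i⟩ := by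
  have hj : Fin.castLE (Nat.sub_le _ _) j ≠ S.last i := by
    rw [Ne, eq_last_iff, Fin.val_castLE]; exact j.2.ne
  simp only [vecMul, dotProduct, M, Matrix.of_apply, Fintype.sum_sigma]
  rw [Fintype.sum_eq_single i (fun i' hi' => by simp [Ne.symm hi']),
    Fintype.sum_eq_add (S.last i) _ hj.symm]
  · simp [last, j.2.ne, neg_add_eq_sub]
  · rintro x ⟨h1, h2⟩
    rw [Ne, eq_last_iff] at h1
    rw [Ne, Fin.ext_iff, Fin.val_castLE] at h2
    simp [h1, Ne.symm h2]

lemma eq_last_of_vecMul_M_some_eq_zero {g : S.Rows → F}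
    (hg : ∀ c, (g ᵥ* M F S) (some c) = 0) (r : S.Rows) : g r = g ⟨r.1, S.last r.1⟩ := by
  obtain ⟨i, j⟩ := r
  by_cases hj : j = S.last i
  · rw [hj]
  · rw [eq_last_iff] at hj
    have := hg ⟨i, ⟨j, lt_of_le_of_ne (Nat.le_sub_one_of_lt j.2) hj⟩⟩
    rwa [vecMul_M_some, sub_eq_zero] at this

lemma sum_M_block (i : Fin k) : ∑ j, M F S ⟨i, j⟩ = eps1 F S := by
  have : (fun r : S.Rows => if r.1 = i then (1 : F) else 0) ᵥ* M F S = eps1 F S := by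
    funext c
    rcases c with _ | ⟨i', j⟩
    · simp [vecMul_M_none, eps1]
    · simp [vecMul_M_some, eps1]
  rw [← this, vecMul_eq_sum, Fintype.sum_sigma]
  simp

lemma M_last (i : Fin k) :
    M F S ⟨i, S.last i⟩ = eps1 F S - ∑ j ∈ univ.erase (S.last i), M F S ⟨i, j⟩ := by
  rw [← S.sum_M_block i, ← add_sum_erase _ _ (mem_univ (S.last i)), add_sub_cancel_right]

def basisRows (B : Finset (Fin n)) : Finset S.Rows :=
  {r | S.label r ∈ B ∧ ¬ (r.2 = S.last r.1 ∧ S.A r.1 ⊆ B)}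

lemma exists_not_mem_basisRows (B : Finset (Fin n)) (i : Fin k) :
    ∃ j, ⟨i, j⟩ ∉ S.basisRows B := by
  by_cases hi : S.A i ⊆ B
  · exact ⟨S.last i, by simp [basisRows, hi]⟩
  · obtain ⟨q, hq, hqB⟩ := not_subset.mp hi
    exact ⟨(S.enum i).symm ⟨q, hq⟩, by simp [basisRows, label, hqB]⟩

variable (F) in
def rowBasis (B : Finset (Fin n)) : Option (S.basisRows B) → S.Cols → F
  | none => eps1 F S
  | some r => M F S r

lemma linearIndependent_rowBasis (B : Finset (Fin n)) :
    LinearIndependent F (S.rowBasis F B) := by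
  rw [Fintype.linearIndependent_iff]
  intro g hg
  set h : S.Rows → F := fun r => if hr : r ∈ S.basisRows B then g (some ⟨r, hr⟩) else 0
  have hsum : g none • eps1 F S + h ᵥ* M F S = 0 := by
    rw [← hg, Fintype.sum_option, vecMul_eq_sum,
      ← sum_subset (subset_univ (S.basisRows B)) (fun r _ hr => by simp [h, hr]),
      ← sum_coe_sort]
    simp [h, rowBasis]
  have hblock : ∀ c, (h ᵥ* M F S) (some c) = 0 := fun c => by
    simpa [eps1] using congrFun hsum (some c)
  have hzero : h = 0 := by
    funext ⟨i, j⟩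
    obtain ⟨j₀, hj₀⟩ := S.exists_not_mem_basisRows B i
    rw [S.eq_last_of_vecMul_M_some_eq_zero hblock,
      ← S.eq_last_of_vecMul_M_some_eq_zero hblock ⟨i, j₀⟩]
    simp [h, hj₀]
  have hnone : g none = 0 := by
    simpa [hzero, eps1] using congrFun hsum none
  rintro (_ | x)
  · exact hnone
  · simpa [h] using congrFun hzero x

variable {B : Finset (Fin n)}

lemma M_mem_span_MSub {r : S.Rows} (hr : S.label r ∈ B) :
    M F S r ∈ span F (Set.range (MSub F S B)) :=
  subset_span ⟨⟨r, hr⟩, rfl⟩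

lemma eps1_mem_span_MSub (hB : S.auth B) : eps1 F S ∈ span F (Set.range (MSub F S B)) := by
  obtain ⟨i, hi⟩ := hB
  rw [← S.sum_M_block i]
  exact sum_mem fun j _ => S.M_mem_span_MSub (hi (S.enum i j).2)

lemma span_rowBasis (hB : S.auth B) :
    span F (Set.range (S.rowBasis F B)) = span F (Set.range (MSub F S B)) := by
  have mem_span : ∀ r ∈ S.basisRows B, M F S r ∈ span F (Set.range (S.rowBasis F B)) :=
    fun r hr => subset_span ⟨some ⟨r, hr⟩, rfl⟩
  apply le_antisymm <;> rw [span_le]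
  · rintro _ ⟨_ | r, rfl⟩
    · exact S.eps1_mem_span_MSub hB
    · exact S.M_mem_span_MSub (mem_filter.mp r.2).2.1
  · rintro _ ⟨⟨⟨i, j⟩, hr⟩, rfl⟩
    by_cases hj : ⟨i, j⟩ ∈ S.basisRows B
    · exact mem_span _ hj
    obtain ⟨rfl, hi⟩ : j = S.last i ∧ S.A i ⊆ B := by simpa [basisRows, hr] using hj
    change M F S ⟨i, S.last i⟩ ∈ _
    rw [M_last]
    refine sub_mem (subset_span ⟨none, rfl⟩) (sum_mem fun j' hj' => mem_span _ ?_)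
    simp [basisRows, label, hi (S.enum i j').2, (mem_erase.mp hj').1]

lemma rank_MSub (hB : S.auth B) : (MSub F S B).rank = #(S.basisRows B) + 1 := by
  rw [rank_eq_finrank_span_row, row, ← S.span_rowBasis hB,
    finrank_span_eq_card (S.linearIndependent_rowBasis B), Fintype.card_option, Fintype.card_coe]

lemma card_basisRows_add_card_subset (B : Finset (Fin n)) :
    #(S.basisRows B) + #{i | S.A i ⊆ B} = #{r | S.label r ∈ B} := by
  have hlast : #{r : S.Rows | r.2 = S.last r.1 ∧ S.A r.1 ⊆ B} = #{i | S.A i ⊆ B} := by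
    refine card_nbij' Sigma.fst (fun i => ⟨i, S.last i⟩) (by simp [Set.MapsTo])
      (by simp [Set.MapsTo]) ?_ (fun _ _ => rfl)
    rintro ⟨i, j⟩ hj
    simp only [coe_filter, mem_univ, true_and, Set.mem_ofPred_eq] at hj
    rw [hj.1]
  rw [← hlast, ← card_filter_add_card_filter_not (s := {r | S.label r ∈ B})
    (fun r : S.Rows => ¬ (r.2 = S.last r.1 ∧ S.A r.1 ⊆ B))]
  congr 2
  · ext r; simp [basisRows]
  · ext r
    simp only [mem_filter, mem_univ, true_and, not_not]
    exact ⟨fun h => ⟨h.2 (S.label_mem r), h⟩, And.right⟩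

lemma rank_MSub_add_card_subset (hB : S.auth B) :
    (MSub F S B).rank + #{i | S.A i ⊆ B} = #{r | S.label r ∈ B} + 1 := by
  rw [S.rank_MSub hB, add_right_comm, S.card_basisRows_add_card_subset]

lemma card_label_eq (p : Fin n) : #{r | S.label r = p} = #{i | p ∈ S.A i} := by
  refine card_bij' (fun r _ => r.1) (fun i hi => ⟨i, (S.enum i).symm ⟨p, by simpa using hi⟩⟩)
    ?_ ?_ ?_ (fun _ _ => rfl)
  · intro r hr
    simp only [mem_filter, mem_univ, true_and] at hr ⊢
    exact hr ▸ S.label_mem r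
  · intro i hi
    exact mem_filter.mpr ⟨mem_univ _, by simp [label]⟩
  · rintro ⟨i, j⟩ hr
    simp only [mem_filter, mem_univ, true_and] at hr
    simp only [Sigma.mk.injEq, heq_eq_eq, true_and, Equiv.symm_apply_eq]
    exact Subtype.ext hr.symm

lemma rank_MSub_erase {p : Fin n} (hp : p ∈ B) (hB : S.auth (B.erase p)) :
    (MSub F S B).rank = (MSub F S (B.erase p)).rank + #{i | p ∈ S.A i ∧ ¬ S.A i ⊆ B} := by
  have h₁ := S.rank_MSub_add_card_subset (F := F) hB
  have h₂ := S.rank_MSub_add_card_subset (F := F) (S.auth_mono hB (erase_subset p B))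
  have rows : #{r | S.label r ∈ B.erase p} + #{r | S.label r = p} = #{r | S.label r ∈ B} := by
    rw [← card_filter_add_card_filter_not (s := {r | S.label r ∈ B}) (fun r => S.label r ≠ p)]
    congr 2 <;> ext r <;> simp [and_comm]
    exact fun h => h ▸ hp
  have blocks : #{i | S.A i ⊆ B.erase p} + #{i | p ∈ S.A i ∧ S.A i ⊆ B} = #{i | S.A i ⊆ B} := by
    rw [← card_filter_add_card_filter_not (s := {i | S.A i ⊆ B}) (fun i => p ∉ S.A i)]
    congr 2 <;> ext r <;> simp [subset_erase, and_comm]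
  have containing :
      #{i | p ∈ S.A i ∧ S.A i ⊆ B} + #{i | p ∈ S.A i ∧ ¬ S.A i ⊆ B} = #{i | p ∈ S.A i} := by
    rw [← card_filter_add_card_filter_not (s := {i | p ∈ S.A i}) (fun i => S.A i ⊆ B)]
    simp only [filter_filter]
  rw [S.card_label_eq] at rows
  omega

end MSP

theorem rank_complement_insert_unauthorized_general {F : Type*} [Field F] {n k : ℕ}
    (S : MSP n k) (hsd : S.selfDual) (A : Finset (Fin n)) (p : Fin n) (hpA : p ∉ A)
    (hA' : ¬ S.auth (insert p A)) :
    ((MSub F S (Finset.univ \ insert p A)).rank : ℤ) =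
      ((MSub F S (Finset.univ \ A)).rank : ℤ)
        - Nat.card {i : Fin k // p ∈ S.A i ∧ ¬ S.A i ⊆ Finset.univ \ A} := by
  have hcompl : univ \ insert p A = (univ \ A).erase p := by
    ext
    simp [not_or]
  have hauth : S.auth ((univ \ A).erase p) := by
    rw [← hcompl]
    exact not_not.mp ((hsd _).not.mp hA')
  rw [hcompl, S.rank_MSub_erase (by simpa using hpA) hauth, Nat.card_eq_fintype_card,
    Fintype.card_subtype]
  push_cast
  ring

/-- Suppose `Γ` is self-dual.  If `A ⊆ P`, `p ∉ A` and
`A ∪ {p} ∉ Γ`, then with `Ā^p = {A_i ∈ Γ_min : p ∈ A_i ∧ A_i ⊄ P∖A}`,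
we have `rk(M_{P∖(A∪{p})}) = rk(M_{P∖A}) − |Ā^p|` (an equality of integers). -/
theorem rank_complement_insert_unauthorized {F : Type*} [Field F] [Fintype F] {n k : ℕ}
    (S : MSP n k) (hsd : S.selfDual) (A : Finset (Fin n)) (p : Fin n) (hpA : p ∉ A)
    (hA' : ¬ S.auth (insert p A)) :
    ((MSub F S (Finset.univ \ insert p A)).rank : ℤ) =
      ((MSub F S (Finset.univ \ A)).rank : ℤ)
        - Nat.card {i : Fin k // p ∈ S.A i ∧ ¬ S.A i ⊆ Finset.univ \ A} :=
  rank_complement_insert_unauthorized_general S hsd A p hpA hA'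
end

section
/- For every subset B ⊆ P with B ∉ Γ (so that the normal-form monotone span program rejects B), there exists a vector v = (v_1,…,v_e) ∈ F_q^e with M_B v = 0 and v_1 ≠ 0; conversely, if such a vector exists then ε₁ = (1,0,…,0) ∉ Im(M_B^t), i.e. ε₁ is not in the row span of M_B. -/
open MSP

open Matrix

/-!
A set `B` outside `Γ` misses some player `p_{i,t_i}` of every minimal authorized set `A_i`.
Take `v₁ = 1` and, in block `i`, a single `1` in the column of the identity row of `p_{i,t_i}`
(no `1` at all if `p_{i,t_i}` labels the last row). Every identity row labelled in `B` sees
a `0`, and the last row of block `i`, when labelled in `B`, sees `1 - 1`.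
Conversely, a kernel vector `v` of `M_B` is orthogonal to the row span of `M_B`,
whereas `ε₁ ⬝ᵥ v = v₁ ≠ 0`.
-/

theorem Matrix.dotProduct_eq_zero_of_mem_span_row {m ι R : Type*} [Fintype m] [Fintype ι]
    [CommSemiring R] (A : Matrix m ι R) {v w : ι → R} (hv : A *ᵥ v = 0)
    (hw : w ∈ Submodule.span R (Set.range A.row)) : w ⬝ᵥ v = 0 := by
  rw [← range_vecMulLinear] at hw
  obtain ⟨c, rfl⟩ := hw
  rw [vecMulLinear_apply, ← dotProduct_mulVec, hv, dotProduct_zero]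

namespace MSP

variable {F : Type*} [Field F] {n k : ℕ} (S : MSP n k)

theorem eps1_dotProduct (v : S.Cols → F) : eps1 F S ⬝ᵥ v = v none := by
  simp [dotProduct, Fintype.sum_option, eps1]

theorem mulVec_M_apply_of_last (v : S.Cols → F) {i : Fin k} {j : Fin (S.A i).card}
    (hj : (j : ℕ) = (S.A i).card - 1) :
    (M F S *ᵥ v) ⟨i, j⟩ = v none - ∑ c : Fin ((S.A i).card - 1), v (some ⟨i, c⟩) := by
  simp only [mulVec, dotProduct, M, of_apply, hj, ↓reduceIte, Fintype.sum_option, one_mul, ite_mul,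
    neg_mul, zero_mul, Fintype.sum_sigma, sub_eq_add_neg, add_right_inj]
  rw [Finset.sum_eq_single i (fun b _ hb => by simp [hb]) (by simp)]
  simp

theorem mulVec_M_apply_of_lt (v : S.Cols → F) {i : Fin k} {j : Fin (S.A i).card}
    {c : Fin ((S.A i).card - 1)} (hc : (c : ℕ) = j) :
    (M F S *ᵥ v) ⟨i, j⟩ = v (some ⟨i, c⟩) := by
  have hc' : (c : ℕ) ≠ (S.A i).card - 1 := by omega
  simp [mulVec, dotProduct, M, Fintype.sum_option, Fintype.sum_sigma, hc', ← hc, Fin.val_inj]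

def kernelWitness (t : ∀ i, Fin (S.A i).card) : S.Cols → F
  | none => 1
  | some ⟨i, c⟩ => if (c : ℕ) = t i then 1 else 0

theorem mulVec_M_kernelWitness (t : ∀ i, Fin (S.A i).card) {i : Fin k}
    {j : Fin (S.A i).card} (hj : j ≠ t i) : (M F S *ᵥ S.kernelWitness t) ⟨i, j⟩ = 0 := by
  by_cases hlast : (j : ℕ) = (S.A i).card - 1
  · have ht : (t i : ℕ) < (S.A i).card - 1 := by
      have := Fin.val_ne_of_ne hj
      omega
    rw [S.mulVec_M_apply_of_last _ hlast, Finset.sum_eq_single ⟨t i, ht⟩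
      (fun c _ hc => by simpa [kernelWitness, Fin.ext_iff] using hc) (by simp)]
    simp [kernelWitness]
  · rw [S.mulVec_M_apply_of_lt _ (c := ⟨j, by omega⟩) rfl]
    simp [kernelWitness, Fin.val_ne_of_ne hj]

theorem exists_MSub_mulVec_eq_zero_of_not_auth {B : Finset (Fin n)} (hB : ¬ S.auth B) :
    ∃ v : S.Cols → F, MSub F S B *ᵥ v = 0 ∧ v none ≠ 0 := by
  have hout : ∀ i, ∃ j, S.label ⟨i, j⟩ ∉ B := by
    intro i
    obtain ⟨p, hpA, hpB⟩ := Finset.not_subset.mp fun h => hB ⟨i, h⟩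
    exact ⟨(S.enum i).symm ⟨p, hpA⟩, by simpa [label] using hpB⟩
  choose t ht using hout
  refine ⟨S.kernelWitness t, funext fun ⟨⟨i, j⟩, hj⟩ => ?_, one_ne_zero⟩
  exact S.mulVec_M_kernelWitness t fun h => ht i (h ▸ hj)

end MSP

theorem reject_iff_kernel_vector_general {F : Type*} [Field F] {n k : ℕ}
    (S : MSP n k) (B : Finset (Fin n)) :
    (¬ S.auth B → ∃ v : S.Cols → F, (MSub F S B).mulVec v = 0 ∧ v none ≠ 0) ∧
    ((∃ v : S.Cols → F, (MSub F S B).mulVec v = 0 ∧ v none ≠ 0) →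
      eps1 F S ∉ Submodule.span F
        (Set.range fun r : {r : S.Rows // S.label r ∈ B} => M F S r.1)) := by
  refine ⟨S.exists_MSub_mulVec_eq_zero_of_not_auth, ?_⟩
  rintro ⟨v, hv, hv0⟩ hmem
  apply hv0
  rw [← S.eps1_dotProduct v]
  exact (MSub F S B).dotProduct_eq_zero_of_mem_span_row hv hmem

/-- For every `B ⊆ P` with `B ∉ Γ` (so the normal-form
monotone span program rejects `B`) there is a vector `v ∈ F_q^e` with
`M_B v = 0` and `v₁ ≠ 0`; conversely, the existence of such a vector implies
`ε₁ = (1,0,…,0)` is not in the row span of `M_B` (i.e. `ε₁ ∉ Im(M_B^t)`). -/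
theorem reject_iff_kernel_vector {F : Type*} [Field F] [Fintype F] {n k : ℕ}
    (S : MSP n k) (B : Finset (Fin n)) :
    (¬ S.auth B → ∃ v : S.Cols → F, (MSub F S B).mulVec v = 0 ∧ v none ≠ 0) ∧
    ((∃ v : S.Cols → F, (MSub F S B).mulVec v = 0 ∧ v none ≠ 0) →
      eps1 F S ∉ Submodule.span F
        (Set.range fun r : {r : S.Rows // S.label r ∈ B} => M F S r.1)) :=
  reject_iff_kernel_vector_general S B
end
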